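/- Let d ≥ 1, m ≥ 1, and let NC(d,m) be the set of non-crossing partitions π of [2dm] with all blocks of even cardinality such that no block of π contains two elements of the same interval J_k = {(k−1)d+1,...,kd}, k = 1,...,2m. Then the cardinality of NC(d,m) is at most (4d+4)^{2m}, and every π ∈ NC(d,m) has at least (d−2)m blocks of size exactly 2. -/

import Mathlib

/-- `i` and `j` lie in the same block of the partition `P`. -/
def SameBlock {N : ℕ} (P : Finpartition (Finset.univ : Finset (Fin N))) (i j : Fin N) : Prop :=
  ∃ b ∈ P.parts, i ∈ b ∧ j ∈ b

/-- A partition of `[N]` is non-crossing if for `i < j < k < l`, `i ∼ k` and `j ∼ l`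
imply `i ∼ j`. -/
def IsNonCrossing {N : ℕ} (P : Finpartition (Finset.univ : Finset (Fin N))) : Prop :=
  ∀ i j k l : Fin N, i < j → j < k → k < l →
    SameBlock P i k → SameBlock P j l → SameBlock P i j

/-- `π ∈ NC(d,m)`: a non-crossing partition of `[2dm]` (0-indexed) with all blocks of
even cardinality such that no block contains two distinct elements of a same interval
`J_k = {(k−1)d+1,...,kd}` (0-indexed: elements with equal `i / d`). -/
def MemNC (d m : ℕ) (π : Finpartition (Finset.univ : Finset (Fin (2 * d * m)))) : Prop :=
  IsNonCrossing π ∧ (∀ b ∈ π.parts, Even b.card) ∧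
    ∀ i j : Fin (2 * d * m), i ≠ j → (i : ℕ) / d = (j : ℕ) / d → ¬ SameBlock π i j

/-!
Every point of a partition is the minimum of its block, its maximum, or interior to its block.
A non-crossing partition is recovered from its block minima and maxima: scanning from left to
right, a point that does not open a block joins the block of the last earlier point whose block
still reaches it. Inside an interval `J_k`, non-crossing and the condition that blocks meet `J_k`
at most once force the block maxima to come first and the block minima last, with at most one
interior point between them. So the pattern on `J_k` is fixed by a number in `[0, d]` and one in
`{0, 1}`, and there are at most `(2d + 2)^{2m}` such partitions. Each block has exactly two
non-interior points, so for blocks of even size `2dm ≤ 2 · #{blocks of size 2} + 2 · #{interior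
points}`, and there are at most `2m` interior points.
-/

open Finset
open scoped Classical

section SameBlock

variable {N : ℕ} {P Q : Finpartition (univ : Finset (Fin N))} {i j k : Fin N}

theorem sameBlock_iff_mem_part : SameBlock P i j ↔ i ∈ P.part j :=
  P.mem_part_iff_exists.symm

theorem sameBlock_iff_part_eq : SameBlock P i j ↔ P.part i = P.part j :=
  sameBlock_iff_mem_part.trans (P.mem_part_iff_part_eq_part (mem_univ i) (mem_univ j))

theorem sameBlock_refl (i : Fin N) : SameBlock P i i :=
  sameBlock_iff_part_eq.2 rfl

theorem SameBlock.symm (h : SameBlock P i j) : SameBlock P j i :=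
  sameBlock_iff_part_eq.2 (sameBlock_iff_part_eq.1 h).symm

theorem sameBlock_comm : SameBlock P i j ↔ SameBlock P j i :=
  ⟨SameBlock.symm, SameBlock.symm⟩

theorem SameBlock.trans (h₁ : SameBlock P i j) (h₂ : SameBlock P j k) : SameBlock P i k :=
  sameBlock_iff_part_eq.2 ((sameBlock_iff_part_eq.1 h₁).trans (sameBlock_iff_part_eq.1 h₂))

theorem Finpartition.eq_of_sameBlock_iff (h : ∀ i j, SameBlock P i j ↔ SameBlock Q i j) :
    P = Q := by
  have parts_subset : ∀ {P Q : Finpartition (univ : Finset (Fin N))},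
      (∀ i, P.part i = Q.part i) → P.parts ⊆ Q.parts := by
    intro P Q h b hb
    obtain ⟨i, -, rfl⟩ := P.part_surjOn hb
    exact h i ▸ Q.part_mem.2 (mem_univ i)
  have hpart : ∀ i, P.part i = Q.part i := fun i => by
    ext j
    rw [← sameBlock_iff_mem_part, ← sameBlock_iff_mem_part, h]
  exact Finpartition.ext (subset_antisymm (parts_subset hpart) (parts_subset (hpart · |>.symm)))

theorem sameBlock_iff_of_forall_lt {p : Fin N → Prop}
    (h : ∀ a b, a < b → p b → (SameBlock P a b ↔ SameBlock Q a b)) {a b : Fin N}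
    (ha : p a) (hb : p b) : SameBlock P a b ↔ SameBlock Q a b := by
  rcases lt_trichotomy a b with hab | rfl | hab
  · exact h a b hab hb
  · simp only [sameBlock_refl]
  · rw [sameBlock_comm, sameBlock_comm (P := Q)]
    exact h b a hab ha

end SameBlock

section BlockExtremes

variable {N : ℕ} {P : Finpartition (univ : Finset (Fin N))} {i j y : Fin N}

def IsBlockMin (P : Finpartition (univ : Finset (Fin N))) (i : Fin N) : Prop :=
  IsLeast (P.part i : Set (Fin N)) i

def IsBlockMax (P : Finpartition (univ : Finset (Fin N))) (i : Fin N) : Prop :=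
  IsGreatest (P.part i : Set (Fin N)) i

def IsBlockInterior (P : Finpartition (univ : Finset (Fin N))) (i : Fin N) : Prop :=
  ¬ IsBlockMin P i ∧ ¬ IsBlockMax P i

theorem isBlockMin_iff : IsBlockMin P i ↔ ∀ j, SameBlock P j i → i ≤ j := by
  simp [IsBlockMin, IsLeast, lowerBounds, sameBlock_iff_mem_part]

theorem isBlockMax_iff : IsBlockMax P i ↔ ∀ j, SameBlock P j i → j ≤ i := by
  simp [IsBlockMax, IsGreatest, upperBounds, sameBlock_iff_mem_part]

theorem not_isBlockMin_iff : ¬ IsBlockMin P i ↔ ∃ j, SameBlock P j i ∧ j < i := by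
  simp [isBlockMin_iff]

theorem not_isBlockMax_iff : ¬ IsBlockMax P i ↔ ∃ j, SameBlock P j i ∧ i < j := by
  simp [isBlockMax_iff]

theorem isBlockMin_iff_min'_eq {b : Finset (Fin N)} (hb : b ∈ P.parts) (hi : i ∈ b) :
    IsBlockMin P i ↔ b.min' (P.nonempty_of_mem_parts hb) = i := by
  rw [min'_eq_iff, IsBlockMin, P.part_eq_of_mem hb hi]
  simp [IsLeast, lowerBounds, hi]

theorem isBlockMax_iff_max'_eq {b : Finset (Fin N)} (hb : b ∈ P.parts) (hi : i ∈ b) :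
    IsBlockMax P i ↔ b.max' (P.nonempty_of_mem_parts hb) = i := by
  rw [max'_eq_iff, IsBlockMax, P.part_eq_of_mem hb hi]
  simp [IsGreatest, upperBounds, hi]

def BlockReaches (P : Finpartition (univ : Finset (Fin N))) (j y : Fin N) : Prop :=
  ∃ e, SameBlock P e j ∧ y ≤ e

theorem not_blockReaches_iff :
    ¬ BlockReaches P j y ↔ ∃ c < y, SameBlock P c j ∧ IsBlockMax P c := by
  constructor
  · intro h
    have hne : (P.part j).Nonempty := P.part_nonempty.2 (mem_univ j)
    set c := (P.part j).max' hne
    have hcj : SameBlock P c j := sameBlock_iff_mem_part.2 ((P.part j).max'_mem hne)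
    refine ⟨c, not_le.1 fun hyc => h ⟨c, hcj, hyc⟩, hcj, ?_⟩
    rw [IsBlockMax, sameBlock_iff_part_eq.1 hcj]
    exact (P.part j).isGreatest_max' hne
  · rintro ⟨c, hcy, hcj, hc⟩ ⟨e, hej, hye⟩
    exact (hye.trans (isBlockMax_iff.1 hc e (hej.trans hcj.symm))).not_gt hcy

end BlockExtremes

section Reconstruction

variable {N : ℕ} {P Q : Finpartition (univ : Finset (Fin N))} {s y : Fin N}

theorem IsNonCrossing.sameBlock_of_forall_blockReaches_le (hP : IsNonCrossing P)
    (hy : ¬ IsBlockMin P y) (hsy : s < y) (hs : BlockReaches P s y)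
    (hmax : ∀ j < y, BlockReaches P j y → j ≤ s) : SameBlock P s y := by
  obtain ⟨a, hay, hya⟩ := not_isBlockMin_iff.1 hy
  obtain ⟨e, hes, hye⟩ := hs
  rcases hye.eq_or_lt with rfl | hye
  · exact hes.symm
  rcases (hmax a hya ⟨y, hay.symm, le_rfl⟩).eq_or_lt with rfl | has
  · exact hay
  exact (hP a s y e has hsy hye hay hes.symm).symm.trans hay

theorem IsNonCrossing.eq_of_isBlockMin_iff_of_isBlockMax_iff (hP : IsNonCrossing P)
    (hQ : IsNonCrossing Q) (hmin : ∀ i, IsBlockMin P i ↔ IsBlockMin Q i)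
    (hmax : ∀ i, IsBlockMax P i ↔ IsBlockMax Q i) : P = Q := by
  suffices key : ∀ y x, x < y → (SameBlock P x y ↔ SameBlock Q x y) from
    Finpartition.eq_of_sameBlock_iff fun i j =>
      sameBlock_iff_of_forall_lt (p := fun _ => True) (fun a b hab _ => key b a hab) trivial trivial
  intro y
  induction y using WellFoundedLT.induction with
  | _ y ih =>
  have hbelow : ∀ a b, a < y → b < y → (SameBlock P a b ↔ SameBlock Q a b) :=
    fun a b => sameBlock_iff_of_forall_lt fun a b hab hb => ih b hb a hab
  have hreach : ∀ j < y, BlockReaches P j y ↔ BlockReaches Q j y := by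
    intro j hj
    rw [← not_iff_not, not_blockReaches_iff, not_blockReaches_iff]
    refine exists_congr fun c => and_congr_right fun hc => ?_
    rw [hbelow c j hc hj, hmax]
  intro x hxy
  by_cases hy : IsBlockMin P y
  · have hyQ := (hmin y).1 hy
    exact iff_of_false (fun h => (isBlockMin_iff.1 hy x h).not_gt hxy)
      (fun h => (isBlockMin_iff.1 hyQ x h).not_gt hxy)
  let S : Finset (Fin N) := {j | j < y ∧ BlockReaches P j y}
  have hS : S.Nonempty := by
    obtain ⟨a, hay, hya⟩ := not_isBlockMin_iff.1 hy
    exact ⟨a, by simpa [S] using ⟨hya, y, hay.symm, le_rfl⟩⟩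
  obtain ⟨hsy, hs⟩ : S.max' hS < y ∧ BlockReaches P (S.max' hS) y := by
    simpa [S] using S.max'_mem hS
  have hle : ∀ j < y, BlockReaches P j y → j ≤ S.max' hS :=
    fun j hj hr => S.le_max' j (by simpa [S] using ⟨hj, hr⟩)
  have hsP := hP.sameBlock_of_forall_blockReaches_le hy hsy hs hle
  have hsQ := hQ.sameBlock_of_forall_blockReaches_le ((hmin y).not.1 hy) hsy ((hreach _ hsy).1 hs)
    fun j hj hr => hle j hj ((hreach j hj).2 hr)
  rw [sameBlock_iff_part_eq, sameBlock_iff_part_eq, ← sameBlock_iff_part_eq.1 hsP,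
    ← sameBlock_iff_part_eq.1 hsQ, ← sameBlock_iff_part_eq, ← sameBlock_iff_part_eq]
  exact hbelow x _ hxy hsy

end Reconstruction

section Fibres

variable {N K : ℕ} {f : Fin N → Fin K} {P Q : Finpartition (univ : Finset (Fin N))}
  {i j : Fin N} {k : Fin K}

/-- `NC(d, m)` with the intervals `J_k` replaced by the fibres of `f`, and evenness of the blocks
weakened to the absence of singletons. -/
structure IsNCTransversal (f : Fin N → Fin K) (P : Finpartition (univ : Finset (Fin N))) :
    Prop where
  nonCrossing : IsNonCrossing P
  one_lt_card_part (i : Fin N) : 1 < #(P.part i)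
  injOn_part (i : Fin N) : Set.InjOn f (P.part i)

variable (f) in
def fibreRank (i : Fin N) : ℕ := #{j | f j = f i ∧ j < i}

variable (f) in
theorem iff_fibreRank_lt {p : Fin N → Prop} [DecidablePred p]
    (hp : ∀ i j, i < j → f i = f j → p j → p i) :
    p i ↔ fibreRank f i < #{j | f j = f i ∧ p j} := by
  constructor
  · intro hi
    refine card_lt_card ((ssubset_iff_of_subset fun j hj => ?_).2 ⟨i, by simp [hi], by simp⟩)
    simp only [mem_filter, mem_univ, true_and] at hj ⊢
    exact ⟨hj.1, hp j i hj.2 hj.1 hi⟩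
  · intro h
    by_contra hi
    refine h.not_ge (card_le_card fun j hj => ?_)
    simp only [mem_filter, mem_univ, true_and] at hj ⊢
    refine ⟨hj.1, ?_⟩
    rcases lt_trichotomy j i with hji | rfl | hij
    · exact hji
    · exact absurd hj.2 hi
    · exact absurd (hp i j hij hj.1.symm hj.2) hi

variable (f) in
noncomputable def maxCount (P : Finpartition (univ : Finset (Fin N))) (k : Fin K) : ℕ :=
  #{j | f j = k ∧ IsBlockMax P j}

variable (f) in
noncomputable def interiorCount (P : Finpartition (univ : Finset (Fin N))) (k : Fin K) : ℕ :=
  #{j | f j = k ∧ IsBlockInterior P j}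

theorem maxCount_le : maxCount f P k ≤ #{j | f j = k} :=
  card_le_card fun j hj => by simp_all

namespace IsNCTransversal

variable (hP : IsNCTransversal f P) (hf : Monotone f)
include hP

theorem apply_ne_of_sameBlock (h : SameBlock P i j) (hne : i ≠ j) : f i ≠ f j :=
  fun hfij => hne (hP.injOn_part j (sameBlock_iff_mem_part.1 h) (P.mem_part (mem_univ j)) hfij)

theorem not_isBlockMin_and_isBlockMax : ¬ (IsBlockMin P i ∧ IsBlockMax P i) := by
  rintro ⟨hmin, hmax⟩
  obtain ⟨a, ha, b, hb, hab⟩ := one_lt_card.1 (hP.one_lt_card_part i)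
  exact hab (((hmax.2 ha).antisymm (hmin.2 ha)).trans ((hmax.2 hb).antisymm (hmin.2 hb)).symm)

theorem card_not_isBlockMin :
    #{j | f j = k ∧ ¬ IsBlockMin P j} = maxCount f P k + interiorCount f P k := by
  rw [maxCount, interiorCount, ← card_filter_add_card_filter_not (p := IsBlockMax P),
    filter_filter, filter_filter]
  congr 2 <;> ext j <;> simp only [mem_filter, mem_univ, true_and]
  · exact ⟨fun h => ⟨h.1.1, h.2⟩,
      fun h => ⟨⟨h.1, fun hmin => hP.not_isBlockMin_and_isBlockMax ⟨hmin, h.2⟩⟩, h.2⟩⟩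
  · exact and_assoc

include hf

theorem isBlockMax_or_isBlockMin (hij : i < j) (hfij : f i = f j) :
    IsBlockMax P i ∨ IsBlockMin P j := by
  by_contra! h
  -- the other points of both blocks lie outside the common fibre, hence on either side of `i < j`
  obtain ⟨c, hci, hic⟩ := not_isBlockMax_iff.1 h.1
  obtain ⟨a, haj, haj'⟩ := not_isBlockMin_iff.1 h.2
  have hjc : j < c :=
    hf.reflect_lt (hfij ▸ (hf hic.le).lt_of_ne (hP.apply_ne_of_sameBlock hci.symm hic.ne))
  have hai : a < i :=
    hf.reflect_lt (hfij ▸ (hf haj'.le).lt_of_ne (hP.apply_ne_of_sameBlock haj haj'.ne))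
  have hai' : SameBlock P a i := hP.nonCrossing a i j c hai hij hjc haj hci.symm
  exact hP.apply_ne_of_sameBlock (hai'.symm.trans haj) hij.ne hfij

theorem isBlockMax_of_lt (hj : IsBlockMax P j) (hij : i < j) (hfij : f i = f j) :
    IsBlockMax P i :=
  (hP.isBlockMax_or_isBlockMin hf hij hfij).resolve_right fun h =>
    hP.not_isBlockMin_and_isBlockMax ⟨h, hj⟩

theorem not_isBlockMin_of_lt (hj : ¬ IsBlockMin P j) (hij : i < j) (hfij : f i = f j) :
    ¬ IsBlockMin P i := fun hi =>
  hj ((hP.isBlockMax_or_isBlockMin hf hij hfij).resolve_left fun h =>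
    hP.not_isBlockMin_and_isBlockMax ⟨hi, h⟩)

theorem eq_of_isBlockInterior (hi : IsBlockInterior P i) (hj : IsBlockInterior P j)
    (hfij : f i = f j) : i = j := by
  by_contra hne
  rcases lt_or_gt_of_ne hne with h | h
  · exact (hP.isBlockMax_or_isBlockMin hf h hfij).elim hi.2 hj.1
  · exact (hP.isBlockMax_or_isBlockMin hf h hfij.symm).elim hj.2 hi.1

theorem isBlockMax_iff_fibreRank_lt : IsBlockMax P i ↔ fibreRank f i < maxCount f P (f i) :=
  iff_fibreRank_lt f fun _ _ hij hfij hj => hP.isBlockMax_of_lt hf hj hij hfij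

theorem not_isBlockMin_iff_fibreRank_lt :
    ¬ IsBlockMin P i ↔ fibreRank f i < maxCount f P (f i) + interiorCount f P (f i) := by
  rw [← hP.card_not_isBlockMin]
  exact iff_fibreRank_lt f fun _ _ hij hfij hj => hP.not_isBlockMin_of_lt hf hj hij hfij

theorem interiorCount_le_one : interiorCount f P k ≤ 1 :=
  card_le_one.2 fun a ha b hb => by
    simp only [mem_filter, mem_univ, true_and] at ha hb
    exact hP.eq_of_isBlockInterior hf ha.2 hb.2 (ha.1.trans hb.1.symm)

theorem card_isBlockInterior_le : #{i | IsBlockInterior P i} ≤ K := by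
  simpa using card_le_card_of_injOn f (fun _ _ => mem_univ _) fun a ha b hb hab =>
    hP.eq_of_isBlockInterior hf (by simpa using ha) (by simpa using hb) hab

theorem eq_of_maxCount_eq_of_interiorCount_eq (hQ : IsNCTransversal f Q)
    (hmax : maxCount f P = maxCount f Q) (hint : interiorCount f P = interiorCount f Q) :
    P = Q :=
  hP.nonCrossing.eq_of_isBlockMin_iff_of_isBlockMax_iff hQ.nonCrossing
    (fun i => by
      rw [← not_iff_not, hP.not_isBlockMin_iff_fibreRank_lt hf,
        hQ.not_isBlockMin_iff_fibreRank_lt hf, hmax, hint])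
    (fun i => by
      rw [hP.isBlockMax_iff_fibreRank_lt hf, hQ.isBlockMax_iff_fibreRank_lt hf, hmax])

end IsNCTransversal

/-- A partition is encoded by the numbers of block maxima and of block-interior points in each
fibre of `f`. -/
theorem card_isNCTransversal_le (hf : Monotone f) {D : ℕ} (hD : ∀ k, #{j | f j = k} ≤ D) :
    Nat.card {P // IsNCTransversal f P} ≤ ((D + 1) * 2) ^ K := by
  let code (P : {P // IsNCTransversal f P}) (k : Fin K) : Fin (D + 1) × Fin 2 :=
    (⟨maxCount f P k, Nat.lt_succ_of_le (maxCount_le.trans (hD k))⟩,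
      ⟨interiorCount f P k, Nat.lt_succ_of_le (P.2.interiorCount_le_one hf)⟩)
  have hcode : Function.Injective code := fun P Q h =>
    Subtype.ext (P.2.eq_of_maxCount_eq_of_interiorCount_eq hf Q.2
      (funext fun k => congrArg (fun c => ((c k).1 : ℕ)) h)
      (funext fun k => congrArg (fun c => ((c k).2 : ℕ)) h))
  calc Nat.card {P // IsNCTransversal f P}
      ≤ Nat.card (Fin K → Fin (D + 1) × Fin 2) := Nat.card_le_card_of_injective code hcode
    _ = ((D + 1) * 2) ^ K := by simp

end Fibres

section PairBlocks

variable {N : ℕ} {P : Finpartition (univ : Finset (Fin N))} {b : Finset (Fin N)}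

theorem Finpartition.card_filter_eq_sum {α : Type*} [DecidableEq α] {s : Finset α}
    (P : Finpartition s) (p : α → Prop) [DecidablePred p] :
    #{i ∈ s | p i} = ∑ b ∈ P.parts, #{i ∈ b | p i} := by
  rw [← card_biUnion (P.disjoint.mono fun b => filter_subset p b), ← filter_biUnion,
    show P.parts.biUnion (fun b => b) = s from P.biUnion_parts]

theorem card_filter_isBlockInterior_add_two (hb : b ∈ P.parts) (h : 1 < #b) :
    #{i ∈ b | IsBlockInterior P i} + 2 = #b := by
  have hne := P.nonempty_of_mem_parts hb
  have hends : {i ∈ b | ¬ IsBlockInterior P i} = {b.min' hne, b.max' hne} := by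
    ext i
    simp only [mem_filter, IsBlockInterior, not_and_or, not_not, mem_insert, mem_singleton]
    constructor
    · rintro ⟨hi, h | h⟩
      · exact .inl ((isBlockMin_iff_min'_eq hb hi).1 h).symm
      · exact .inr ((isBlockMax_iff_max'_eq hb hi).1 h).symm
    · rintro (rfl | rfl)
      · exact ⟨min'_mem b hne, .inl ((isBlockMin_iff_min'_eq hb (min'_mem b hne)).2 rfl)⟩
      · exact ⟨max'_mem b hne, .inr ((isBlockMax_iff_max'_eq hb (max'_mem b hne)).2 rfl)⟩
  rw [← card_filter_add_card_filter_not (s := b) (p := IsBlockInterior P), hends,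
    card_pair (min'_lt_max'_of_card b h).ne]

theorem le_two_mul_card_pairs_add_two_mul_card_isBlockInterior
    (heven : ∀ b ∈ P.parts, Even #b) :
    N ≤ 2 * #{b ∈ P.parts | #b = 2} + 2 * #{i | IsBlockInterior P i} := by
  have hblock : ∀ b ∈ P.parts,
      #b ≤ 2 * (if #b = 2 then 1 else 0) + 2 * #{i ∈ b | IsBlockInterior P i} := by
    intro b hb
    obtain ⟨r, hr⟩ := heven b hb
    have hpos := (P.nonempty_of_mem_parts hb).card_pos
    have := card_filter_isBlockInterior_add_two hb (by omega)
    split_ifs <;> omega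
  calc N = ∑ b ∈ P.parts, #b := by simp [P.sum_card_parts]
    _ ≤ ∑ b ∈ P.parts,
          (2 * (if #b = 2 then 1 else 0) + 2 * #{i ∈ b | IsBlockInterior P i}) :=
      sum_le_sum hblock
    _ = _ := by
      rw [sum_add_distrib, ← mul_sum, ← mul_sum, ← card_filter, ← P.card_filter_eq_sum]

end PairBlocks

section Intervals

variable {d m : ℕ}

def intervalIndex (d m : ℕ) (i : Fin (2 * d * m)) : Fin (2 * m) :=
  ⟨i / d, Nat.div_lt_of_lt_mul (i.isLt.trans_eq (by ring))⟩

theorem monotone_intervalIndex : Monotone (intervalIndex d m) :=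
  fun _ _ h => Fin.mk_le_mk.2 (Nat.div_le_div_right h)

theorem card_fibre_intervalIndex_le (hd : 0 < d) (k : Fin (2 * m)) :
    #{j | intervalIndex d m j = k} ≤ d := by
  have hinj : Set.InjOn (fun j : Fin (2 * d * m) => (j : ℕ) % d)
      ({j | intervalIndex d m j = k} : Finset _) := by
    intro a ha b hb hab
    simp only [coe_filter, mem_univ, true_and, Set.mem_ofPred_eq, intervalIndex,
      Fin.ext_iff] at ha hb
    rw [Fin.ext_iff, ← Nat.mod_add_div a d, ← Nat.mod_add_div b d, ha, hb]
    exact congrArg (· + d * k) hab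
  simpa using card_le_card_of_injOn _ (fun j _ => mem_range.2 (Nat.mod_lt _ hd)) hinj

theorem MemNC.isNCTransversal {π : Finpartition (univ : Finset (Fin (2 * d * m)))}
    (h : MemNC d m π) : IsNCTransversal (intervalIndex d m) π where
  nonCrossing := h.1
  one_lt_card_part i := by
    obtain ⟨r, hr⟩ := h.2.1 _ (π.part_mem.2 (mem_univ i))
    have := card_pos.2 ⟨i, π.mem_part (mem_univ i)⟩
    omega
  injOn_part i a ha b hb hab := by
    by_contra hne
    exact h.2.2 a b hne (congrArg Fin.val hab) ⟨π.part i, π.part_mem.2 (mem_univ i), ha, hb⟩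

end Intervals

theorem card_NC_le_general (d m : ℕ) (hd : 0 < d) :
    Nat.card {π : Finpartition (Finset.univ : Finset (Fin (2 * d * m))) // MemNC d m π} ≤
        (4 * d + 4) ^ (2 * m) ∧
      ∀ π : Finpartition (Finset.univ : Finset (Fin (2 * d * m))), MemNC d m π →
        (d - 2) * m ≤ (π.parts.filter (fun b => b.card = 2)).card := by
  refine ⟨?_, fun π hπ => ?_⟩
  · calc Nat.card {π // MemNC d m π}
        ≤ Nat.card {P // IsNCTransversal (intervalIndex d m) P} :=
          Nat.card_mono (Set.toFinite _) fun _ => MemNC.isNCTransversal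
      _ ≤ ((d + 1) * 2) ^ (2 * m) :=
          card_isNCTransversal_le monotone_intervalIndex (card_fibre_intervalIndex_le hd)
      _ ≤ (4 * d + 4) ^ (2 * m) := Nat.pow_le_pow_left (by omega) _
  · have hN := le_two_mul_card_pairs_add_two_mul_card_isBlockInterior hπ.2.1
    have hint := hπ.isNCTransversal.card_isBlockInterior_le monotone_intervalIndex
    have h2dm : 2 * d * m = 2 * (d * m) := mul_assoc 2 d m
    rw [Nat.sub_mul]
    omega

/-- `|NC(d,m)| ≤ (4d+4)^{2m}`, and every `π ∈ NC(d,m)` has at least `(d−2)m` blocks of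
size exactly `2`. -/
theorem card_NC_le (d m : ℕ) (hd : 0 < d) (hm : 0 < m) :
    Nat.card {π : Finpartition (Finset.univ : Finset (Fin (2 * d * m))) // MemNC d m π} ≤
        (4 * d + 4) ^ (2 * m) ∧
      ∀ π : Finpartition (Finset.univ : Finset (Fin (2 * d * m))), MemNC d m π →
        (d - 2) * m ≤ (π.parts.filter (fun b => b.card = 2)).card :=
  card_NC_le_general d m hd
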